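/- arXiv:1311.7359 — 4 statements merged into one kernel-verified Lean document; each statement's English description precedes it below -/
import Mathlib

section
/- For all x in the interval [0, 1/2], sinh(λx)/sinh(λ(1−x)) ≤ 2x, where λ > 0. -/
/-!
On `[0, ∞)` the function `sinh` is convex and vanishes at `0`, so `sinh (t a) ≤ t sinh a` for
`t ∈ [0, 1]`. With `t = 2x` and `a = λ/2` this gives `sinh (λx) ≤ 2x sinh (λ/2)`, and
`sinh (λ/2) ≤ sinh (λ(1 - x))` by monotonicity, since `x ≤ 1/2`.
-/

open Set

namespace Real

lemma convexOn_sinh_Ici : ConvexOn ℝ (Ici 0) sinh := by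
  refine MonotoneOn.convexOn_of_deriv (convex_Ici 0) continuous_sinh.continuousOn
    differentiable_sinh.differentiableOn ?_
  rw [interior_Ici, deriv_sinh]
  intro x hx y hy hxy
  exact cosh_le_cosh.2 (by rwa [abs_of_pos hx, abs_of_pos hy])

lemma sinh_mul_le_mul_sinh {a t : ℝ} (ha : 0 ≤ a) (ht₀ : 0 ≤ t) (ht₁ : t ≤ 1) :
    sinh (t * a) ≤ t * sinh a := by
  simpa using convexOn_sinh_Ici.2 self_mem_Ici ha (sub_nonneg.2 ht₁) ht₀ (sub_add_cancel 1 t)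

lemma sinh_mul_div_sinh_mul_one_sub_le {lam x : ℝ} (hlam : 0 ≤ lam) (hx₀ : 0 ≤ x)
    (hx : x ≤ 1 / 2) : sinh (lam * x) / sinh (lam * (1 - x)) ≤ 2 * x := by
  refine div_le_of_le_mul₀ (sinh_nonneg_iff.2 (by nlinarith)) (by positivity) ?_
  calc sinh (lam * x) = sinh (2 * x * (lam / 2)) := by ring_nf
    _ ≤ 2 * x * sinh (lam / 2) :=
      sinh_mul_le_mul_sinh (by positivity) (by positivity) (by linarith)
    _ ≤ 2 * x * sinh (lam * (1 - x)) :=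
      mul_le_mul_of_nonneg_left (sinh_le_sinh.2 (by nlinarith)) (by positivity)

lemma sinh_abs_mul_div_sinh_abs_mul (lam x y : ℝ) :
    sinh (|lam| * x) / sinh (|lam| * y) = sinh (lam * x) / sinh (lam * y) := by
  rcases abs_choice lam with h | h <;> simp only [h, neg_mul, sinh_neg, neg_div_neg_eq]

end Real

theorem sinh_ratio_le_general (lam : ℝ) :
    ∀ x ∈ Set.Icc (0:ℝ) (1/2),
      Real.sinh (lam * x) / Real.sinh (lam * (1 - x)) ≤ 2 * x := by
  rintro x ⟨hx₀, hx⟩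
  rw [← Real.sinh_abs_mul_div_sinh_abs_mul]
  exact Real.sinh_mul_div_sinh_mul_one_sub_le (abs_nonneg lam) hx₀ hx

theorem sinh_ratio_le (lam : ℝ) (hlam : 0 < lam) :
    ∀ x ∈ Set.Icc (0:ℝ) (1/2),
      Real.sinh (lam * x) / Real.sinh (lam * (1 - x)) ≤ 2 * x :=
  sinh_ratio_le_general lam
end

section
/- The function h(c) = ∫₀^c e^{−x(2c−x)} dx, for c > 0, satisfies h(c) ≤ 1/π^{1/2} for all c > 0. -/
/-!
Substituting `x = c - t` turns the integral into `exp (-c ^ 2) * ∫₀^c exp (t ^ 2) dt`, so it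
suffices to show `√π * ∫₀^u exp (t ^ 2) dt ≤ exp (u ^ 2)` for every `u`. The difference
`exp (u ^ 2) - s * ∫₀^u exp (t ^ 2) dt` has derivative `exp (u ^ 2) * (2 * u - s)`, so it is smallest
at `u = s / 2`; for `s = √π` its value there is nonnegative by Taylor estimates of both terms.
-/

open Real Set intervalIntegral

noncomputable section

/-- `√π / 2 * erfi u`, so that `exp (-u ^ 2) * expSqIntegral u` is Dawson's function. -/
def expSqIntegral (u : ℝ) : ℝ := ∫ t in (0 : ℝ)..u, exp (t ^ 2)

lemma continuous_exp_sq : Continuous fun t : ℝ => exp (t ^ 2) := by fun_prop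

lemma hasDerivAt_expSqIntegral (u : ℝ) : HasDerivAt expSqIntegral (exp (u ^ 2)) u :=
  integral_hasDerivAt_right (continuous_exp_sq.intervalIntegrable _ _)
    continuous_exp_sq.aestronglyMeasurable.stronglyMeasurableAtFilter
    continuous_exp_sq.continuousAt

lemma exp_sq_sub_mul_expSqIntegral_le (s u : ℝ) :
    exp ((s / 2) ^ 2) - s * expSqIntegral (s / 2) ≤ exp (u ^ 2) - s * expSqIntegral u := by
  set φ : ℝ → ℝ := fun u => exp (u ^ 2) - s * expSqIntegral u
  have hφ : ∀ u, HasDerivAt φ (exp (u ^ 2) * (2 * u - s)) u := fun u =>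
    ((hasDerivAt_pow 2 u).exp.sub ((hasDerivAt_expSqIntegral u).const_mul s)).congr_deriv
      (by push_cast; ring)
  have hcont : Continuous φ := continuous_iff_continuousAt.2 fun u => (hφ u).continuousAt
  rcases le_total u (s / 2) with hu | hu
  · refine antitoneOn_of_hasDerivWithinAt_nonpos (convex_Iic _) hcont.continuousOn
      (fun u _ => (hφ u).hasDerivWithinAt) (fun v hv => ?_) (mem_Iic.2 hu) self_mem_Iic hu
    rw [interior_Iic, mem_Iio] at hv
    exact mul_nonpos_of_nonneg_of_nonpos (exp_pos _).le (by linarith)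
  · refine monotoneOn_of_hasDerivWithinAt_nonneg (convex_Ici _) hcont.continuousOn
      (fun u _ => (hφ u).hasDerivWithinAt) (fun v hv => ?_) self_mem_Ici (mem_Ici.2 hu) hu
    rw [interior_Ici, mem_Ioi] at hv
    exact mul_nonneg (exp_pos _).le (by linarith)

lemma exp_le_cubic_of_le_one {x : ℝ} (hx₀ : 0 ≤ x) (hx₁ : x ≤ 1) :
    exp x ≤ 1 + x + x ^ 2 / 2 + 2 * x ^ 3 / 9 := by
  have := exp_bound' hx₀ hx₁ (n := 3) (by norm_num)
  norm_num [Finset.sum_range_succ, Nat.factorial] at this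
  linarith

lemma expSqIntegral_le_of_le_one {a : ℝ} (ha₀ : 0 ≤ a) (ha₁ : a ≤ 1) :
    expSqIntegral a ≤ a + a ^ 3 / 3 + a ^ 5 / 10 + 2 * a ^ 7 / 63 := by
  have hpoly : ∫ t in (0 : ℝ)..a, (1 + t ^ 2 + t ^ 4 / 2 + 2 * t ^ 6 / 9) =
      a + a ^ 3 / 3 + a ^ 5 / 10 + 2 * a ^ 7 / 63 := by
    rw [integral_add, integral_add, integral_add]
    · simp only [integral_const, integral_pow, integral_div, integral_const_mul, smul_eq_mul]
      ring
    all_goals exact Continuous.intervalIntegrable (by fun_prop) _ _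
  rw [← hpoly]
  refine integral_mono_on ha₀ (continuous_exp_sq.intervalIntegrable _ _)
    (Continuous.intervalIntegrable (by fun_prop) _ _) fun t ht => ?_
  have ht2 : t ^ 2 ≤ 1 := by nlinarith [ht.1, ht.2]
  convert exp_le_cubic_of_le_one (sq_nonneg t) ht2 using 1
  ring

lemma sqrt_pi_mul_expSqIntegral_le : √π * expSqIntegral (√π / 2) ≤ exp ((√π / 2) ^ 2) := by
  set a := √π / 2
  have ha₀ : 0 ≤ a := by positivity
  have hsq : a ^ 2 = π / 4 := by rw [div_pow, sq_sqrt pi_pos.le]; norm_num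
  have ha₁ : a ≤ 1 := by nlinarith [pi_lt_four]
  have hy : a ^ 2 ≤ 0.79 := by linarith [pi_lt_d2]
  have hexp : 1 + a ^ 2 + (a ^ 2) ^ 2 / 2 + (a ^ 2) ^ 3 / 6 ≤ exp (a ^ 2) := by
    have := sum_le_exp_of_nonneg (sq_nonneg a) 4
    norm_num [Finset.sum_range_succ, Nat.factorial] at this
    linarith
  have hsqrt : √π = 2 * a := by ring
  calc √π * expSqIntegral a
      ≤ 2 * a * (a + a ^ 3 / 3 + a ^ 5 / 10 + 2 * a ^ 7 / 63) := by
        rw [hsqrt]; gcongr; exact expSqIntegral_le_of_le_one ha₀ ha₁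
    _ ≤ 1 + a ^ 2 + (a ^ 2) ^ 2 / 2 + (a ^ 2) ^ 3 / 6 := by
        nlinarith [sq_nonneg a, pow_le_pow_left₀ (sq_nonneg a) hy 3]
    _ ≤ exp (a ^ 2) := hexp

lemma expSqIntegral_le (u : ℝ) : expSqIntegral u ≤ exp (u ^ 2) / √π := by
  rw [le_div_iff₀' (sqrt_pos.2 pi_pos)]
  linarith [exp_sq_sub_mul_expSqIntegral_le √π u, sqrt_pi_mul_expSqIntegral_le]

lemma integral_exp_neg_mul_two_mul_sub (c : ℝ) :
    ∫ x in (0 : ℝ)..c, exp (-(x * (2 * c - x))) = exp (-c ^ 2) * expSqIntegral c := by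
  have hsplit : ∀ x : ℝ, exp (-(x * (2 * c - x))) = exp (-c ^ 2) * exp ((c - x) ^ 2) := fun x => by
    rw [← exp_add]; ring_nf
  simp_rw [hsplit, integral_const_mul, integral_comp_sub_left
    (fun t => exp (t ^ 2)) c, sub_self, sub_zero]
  rfl

theorem integral_exp_neg_le_general (c : ℝ) :
    (∫ x in (0:ℝ)..c, Real.exp (-(x * (2 * c - x)))) ≤ 1 / Real.sqrt Real.pi := by
  calc ∫ x in (0 : ℝ)..c, exp (-(x * (2 * c - x)))
      = exp (-c ^ 2) * expSqIntegral c := integral_exp_neg_mul_two_mul_sub c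
    _ ≤ exp (-c ^ 2) * (exp (c ^ 2) / √π) := by gcongr; exact expSqIntegral_le c
    _ = 1 / √π := by rw [mul_div_assoc', ← exp_add, neg_add_cancel, exp_zero]

theorem integral_exp_neg_le (c : ℝ) (hc : 0 < c) :
    (∫ x in (0:ℝ)..c, Real.exp (-(x * (2 * c - x)))) ≤ 1 / Real.sqrt Real.pi :=
  integral_exp_neg_le_general c

end
end

section
/- Let λ > 0 and B(x) = sinh(λx)/λ on [0,1], B(x) = sinh(λ(2−x))/λ on (1,2], B = 0 elsewhere. Then the infimum over x ∈ [0,1) of B(x)² + B(x+1)² equals 2 sinh²(λ/2)/λ², attained at x = 1/2. -/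
/-!
On `[0, 1]` the two shifted copies are `B x = sinh (λx)/λ` and `B (x + 1) = sinh (λ(1 - x))/λ`,
whose arguments add up to `λ`. Since `sinh a ² + sinh b ² = cosh (a + b) cosh (a - b) - 1` and
`cosh (a - b) ≥ 1`, the sum of squares is at least `cosh λ - 1 = 2 sinh (λ/2)²`, with equality
at `x = 1/2`.
-/

open Real Set

lemma sinh_sq_add_sinh_sq (a b : ℝ) :
    sinh a ^ 2 + sinh b ^ 2 = cosh (a + b) * cosh (a - b) - 1 := by
  rw [cosh_add, cosh_sub]
  linear_combination -cosh b ^ 2 * cosh_sq a - (sinh a ^ 2 + 1) * cosh_sq b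

lemma two_mul_sinh_half_sq (a : ℝ) : 2 * sinh (a / 2) ^ 2 = cosh a - 1 := by
  have h := cosh_two_mul (a / 2)
  rw [mul_div_cancel₀ a two_ne_zero] at h
  linear_combination -h - cosh_sq (a / 2)

lemma two_mul_sinh_sq_half_add_le (a b : ℝ) :
    2 * sinh ((a + b) / 2) ^ 2 ≤ sinh a ^ 2 + sinh b ^ 2 := by
  rw [two_mul_sinh_half_sq, sinh_sq_add_sinh_sq]
  nlinarith [cosh_pos (a + b), one_le_cosh (a - b)]

noncomputable def expBSpline2 (lam x : ℝ) : ℝ :=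
  if x ∈ Icc (0:ℝ) 1 then sinh (lam * x) / lam
  else if x ∈ Ioc (1:ℝ) 2 then sinh (lam * (2 - x)) / lam
  else 0

namespace expBSpline2

variable {lam x : ℝ}

lemma of_mem_Icc (hx : x ∈ Icc (0:ℝ) 1) : expBSpline2 lam x = sinh (lam * x) / lam := by
  rw [expBSpline2, if_pos hx]

lemma add_one_of_mem_Icc (hx : x ∈ Icc (0:ℝ) 1) :
    expBSpline2 lam (x + 1) = sinh (lam * (1 - x)) / lam := by
  obtain rfl | hx0 := hx.1.eq_or_lt
  · simp [expBSpline2]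
  · have hx' : x + 1 ∈ Ioc (1:ℝ) 2 := ⟨by linarith, by linarith [hx.2]⟩
    have hx'' : x + 1 ∉ Icc (0:ℝ) 1 := fun h => by linarith [h.2]
    rw [expBSpline2, if_neg hx'', if_pos hx']
    ring_nf

lemma sq_add_sq_add_one (hx : x ∈ Icc (0:ℝ) 1) :
    expBSpline2 lam x ^ 2 + expBSpline2 lam (x + 1) ^ 2 =
      (sinh (lam * x) ^ 2 + sinh (lam * (1 - x)) ^ 2) / lam ^ 2 := by
  rw [of_mem_Icc hx, add_one_of_mem_Icc hx, div_pow, div_pow, add_div]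

end expBSpline2

theorem EB2_inf_shifted_squares_general (lam : ℝ) (B : ℝ → ℝ)
    (hB : ∀ x : ℝ, B x =
      if x ∈ Set.Icc (0:ℝ) 1 then Real.sinh (lam * x) / lam
      else if x ∈ Set.Ioc (1:ℝ) 2 then Real.sinh (lam * (2 - x)) / lam
      else 0) :
    IsLeast ((fun x : ℝ => B x ^ 2 + B (x + 1) ^ 2) '' Set.Ico (0:ℝ) 1)
        (2 * Real.sinh (lam / 2) ^ 2 / lam ^ 2) ∧
      B (1/2) ^ 2 + B (1/2 + 1) ^ 2 = 2 * Real.sinh (lam / 2) ^ 2 / lam ^ 2 := by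
  obtain rfl : B = expBSpline2 lam := funext hB
  have h_half : (1/2 : ℝ) ∈ Ico 0 1 := ⟨by norm_num, by norm_num⟩
  have h_value : expBSpline2 lam (1/2) ^ 2 + expBSpline2 lam (1/2 + 1) ^ 2 =
      2 * sinh (lam / 2) ^ 2 / lam ^ 2 := by
    rw [expBSpline2.sq_add_sq_add_one (Ico_subset_Icc_self h_half)]
    ring_nf
  refine ⟨⟨⟨1/2, h_half, h_value⟩, ?_⟩, h_value⟩
  rintro _ ⟨x, hx, rfl⟩
  dsimp only
  rw [expBSpline2.sq_add_sq_add_one (Ico_subset_Icc_self hx)]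
  gcongr
  simpa [mul_add, mul_sub] using two_mul_sinh_sq_half_add_le (lam * x) (lam * (1 - x))

theorem EB2_inf_shifted_squares (lam : ℝ) (hlam : 0 < lam) (B : ℝ → ℝ)
    (hB : ∀ x : ℝ, B x =
      if x ∈ Set.Icc (0:ℝ) 1 then Real.sinh (lam * x) / lam
      else if x ∈ Set.Ioc (1:ℝ) 2 then Real.sinh (lam * (2 - x)) / lam
      else 0) :
    IsLeast ((fun x : ℝ => B x ^ 2 + B (x + 1) ^ 2) '' Set.Ico (0:ℝ) 1)
        (2 * Real.sinh (lam / 2) ^ 2 / lam ^ 2) ∧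
      B (1/2) ^ 2 + B (1/2 + 1) ^ 2 = 2 * Real.sinh (lam / 2) ^ 2 / lam ^ 2 :=
  EB2_inf_shifted_squares_general lam B hB
end

section
/- Let S be the (s+1)×s matrix whose only nonzero entries are S_{j,j} = a_j for 1 ≤ j ≤ r−1, S_{r,r} = a_r, S_{r+1,r} = b_r, and S_{j+1,j} = b_j for r+1 ≤ j ≤ s, where all a_j, b_j > 0 and 1 ≤ r ≤ s. Then the operator norm of the Moore–Penrose pseudo-inverse of S equals max{ a_j^{−1} for 1 ≤ j ≤ r−1, b_j^{−1} for r+1 ≤ j ≤ s, (a_r² + b_r²)^{−1/2} }. -/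
/-!
The columns of `S` have pairwise disjoint supports, so `SᵀS = diag(d)` with `d j` the squared
norm of the `j`th column `cⱼ`, and the pseudo-inverse is `G = diag(d)⁻¹ Sᵀ`. Since `SG` is the
orthogonal projection onto the column space, `∑ⱼ dⱼ (Gv)ⱼ² = ‖SGv‖² ≤ ‖v‖²`, whence
`‖Gv‖ ≤ maxⱼ dⱼ^{-1/2} ‖v‖`; equality holds at `v = cⱼ` for a maximising `j`, as `G cⱼ = eⱼ`.
Finally `dⱼ` is `aⱼ²`, `aᵣ² + bᵣ²` or `bⱼ²` according as `j < r`, `j = r` or `j > r`.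
-/

open Matrix

section OrthogonalColumns

variable {m n : Type*} [Fintype m] [DecidableEq n]

theorem sum_sq_mulVec_pinv_mulVec_le [Fintype n] (S : Matrix m n ℝ) (hS : IsUnit (Sᵀ * S).det)
    (v : m → ℝ) : ∑ i, (S *ᵥ (((Sᵀ * S)⁻¹ * Sᵀ) *ᵥ v)) i ^ 2 ≤ ∑ i, v i ^ 2 := by
  set p := S *ᵥ (((Sᵀ * S)⁻¹ * Sᵀ) *ᵥ v) with hp
  have hperp : Sᵀ *ᵥ (v - p) = 0 := by
    rw [mulVec_sub, hp, mulVec_mulVec, mulVec_mulVec, ← Matrix.mul_assoc,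
      mul_nonsing_inv _ hS, Matrix.one_mul, sub_self]
  have horth : p ⬝ᵥ (v - p) = 0 := by
    rw [dotProduct_comm, hp, dotProduct_mulVec, ← mulVec_transpose, hperp, zero_dotProduct]
  have hpyth : ∑ i, v i ^ 2 = ∑ i, p i ^ 2 + 2 * (p ⬝ᵥ (v - p)) + ∑ i, (v - p) i ^ 2 := by
    simp only [dotProduct, Finset.mul_sum, ← Finset.sum_add_distrib, Pi.sub_apply]
    exact Finset.sum_congr rfl fun i _ => by ring
  have hres : 0 ≤ ∑ i, (v - p) i ^ 2 := Finset.sum_nonneg fun i _ => sq_nonneg _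
  linarith

variable {S : Matrix m n ℝ} {d : n → ℝ}

theorem sum_sq_mulVec_of_transpose_mul_self_eq_diagonal [Fintype n] (hSd : Sᵀ * S = diagonal d)
    (g : n → ℝ) : ∑ i, (S *ᵥ g) i ^ 2 = ∑ j, d j * g j ^ 2 := by
  calc ∑ i, (S *ᵥ g) i ^ 2 = (S *ᵥ g) ⬝ᵥ (S *ᵥ g) := by simp only [dotProduct, sq]
    _ = g ⬝ᵥ (diagonal d *ᵥ g) := by
      rw [dotProduct_mulVec, ← mulVec_transpose, mulVec_mulVec, hSd, dotProduct_comm]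
    _ = ∑ j, d j * g j ^ 2 := by
      simp only [dotProduct, mulVec_diagonal]
      exact Finset.sum_congr rfl fun j _ => by ring

theorem sum_sq_col_of_transpose_mul_self_eq_diagonal (hSd : Sᵀ * S = diagonal d) (j : n) :
    ∑ i, S i j ^ 2 = d j := by
  simpa [mul_apply, sq] using congrFun (congrFun hSd j) j

theorem pinv_mulVec_col [Fintype n] (hS : IsUnit (Sᵀ * S).det) (j : n) :
    ((Sᵀ * S)⁻¹ * Sᵀ) *ᵥ S.col j = Pi.single j 1 := by
  rw [← mulVec_single_one, mulVec_mulVec, Matrix.mul_assoc, nonsing_inv_mul _ hS, one_mulVec]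

theorem sum_sq_pinv_mulVec_le_of_transpose_mul_self_eq_diagonal [Fintype n]
    (hSd : Sᵀ * S = diagonal d) {M : ℝ} (hM : ∀ j, 1 ≤ M ^ 2 * d j) (v : m → ℝ) :
    ∑ j, (((Sᵀ * S)⁻¹ * Sᵀ) *ᵥ v) j ^ 2 ≤ M ^ 2 * ∑ i, v i ^ 2 := by
  have hunit : IsUnit (Sᵀ * S).det := by
    rw [hSd, det_diagonal]
    exact (Finset.prod_ne_zero_iff.2 fun j _ h0 => by linarith [h0 ▸ hM j]).isUnit
  set g := ((Sᵀ * S)⁻¹ * Sᵀ) *ᵥ v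
  calc ∑ j, g j ^ 2 ≤ ∑ j, M ^ 2 * (d j * g j ^ 2) :=
        Finset.sum_le_sum fun j _ => by nlinarith [hM j, sq_nonneg (g j)]
    _ = M ^ 2 * ∑ i, (S *ᵥ g) i ^ 2 := by
      rw [← Finset.mul_sum, sum_sq_mulVec_of_transpose_mul_self_eq_diagonal hSd]
    _ ≤ M ^ 2 * ∑ i, v i ^ 2 :=
      mul_le_mul_of_nonneg_left (sum_sq_mulVec_pinv_mulVec_le S hunit v) (sq_nonneg M)

theorem pinv_norm_of_transpose_mul_self_eq_diagonal [Fintype n] [Nonempty n] (hd : ∀ j, 0 < d j)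
    (hSd : Sᵀ * S = diagonal d) {M : ℝ} (hM : M = ⨆ j, (√(d j))⁻¹) :
    (∀ v : m → ℝ, ∑ j, (((Sᵀ * S)⁻¹ * Sᵀ) *ᵥ v) j ^ 2 ≤ M ^ 2 * ∑ i, v i ^ 2) ∧
    ∃ v : m → ℝ, v ≠ 0 ∧ ∑ j, (((Sᵀ * S)⁻¹ * Sᵀ) *ᵥ v) j ^ 2 = M ^ 2 * ∑ i, v i ^ 2 := by
  have hsq : ∀ j, ((√(d j))⁻¹) ^ 2 * d j = 1 := fun j => by
    rw [inv_pow, Real.sq_sqrt (hd j).le, inv_mul_cancel₀ (hd j).ne']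
  have hle : ∀ j, 1 ≤ M ^ 2 * d j := fun j => by
    have hj : (√(d j))⁻¹ ≤ M :=
      hM ▸ le_ciSup (f := fun j => (√(d j))⁻¹) (Set.finite_range _).bddAbove j
    calc 1 = ((√(d j))⁻¹) ^ 2 * d j := (hsq j).symm
      _ ≤ M ^ 2 * d j := by have := (hd j).le; gcongr
  obtain ⟨j, hj⟩ := exists_eq_ciSup_of_finite (f := fun j => (√(d j))⁻¹)
  have hunit : IsUnit (Sᵀ * S).det := by
    rw [hSd, det_diagonal]
    exact (Finset.prod_pos fun j _ => hd j).ne'.isUnit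
  have hcol := sum_sq_col_of_transpose_mul_self_eq_diagonal hSd j
  refine ⟨sum_sq_pinv_mulVec_le_of_transpose_mul_self_eq_diagonal hSd hle, S.col j, ?_, ?_⟩
  · intro h0
    simp only [← col_apply S, h0, Pi.zero_apply, sq, mul_zero, Finset.sum_const_zero] at hcol
    exact (hd j).ne hcol
  · simp only [pinv_mulVec_col hunit, col_apply, hcol, ← hM ▸ hj, hsq]
    simp [Pi.single_apply, ite_pow]

end OrthogonalColumns

def splitBidiagonal {s : ℕ} (r : Fin s) (a b : Fin s → ℝ) : Matrix (Fin (s + 1)) (Fin s) ℝ :=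
  of fun i j =>
    if i = Fin.castSucc j ∧ j ≤ r then a j
    else if i = Fin.succ j ∧ r ≤ j then b j
    else 0

namespace splitBidiagonal

variable {s : ℕ} {r : Fin s} {a b : Fin s → ℝ}

def colNormSq (r : Fin s) (a b : Fin s → ℝ) (j : Fin s) : ℝ :=
  (if j ≤ r then a j ^ 2 else 0) + (if r ≤ j then b j ^ 2 else 0)

theorem colNormSq_pos (ha : ∀ j, 0 < a j) (hb : ∀ j, 0 < b j) (j : Fin s) :
    0 < colNormSq r a b j := by
  have := ha j; have := hb j
  unfold colNormSq
  rcases le_total j r with h | h <;> simp only [h, if_true] <;> split_ifs <;> positivity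

theorem eq_of_mul_ne_zero {i : Fin (s + 1)} {j k : Fin s}
    (h : splitBidiagonal r a b i j * splitBidiagonal r a b i k ≠ 0) : j = k := by
  simp only [splitBidiagonal, of_apply, Fin.ext_iff, Fin.le_def, Fin.val_castSucc,
    Fin.val_succ] at h ⊢
  split_ifs at h <;> first | omega | simp at h

theorem sum_sq_col (j : Fin s) : ∑ i, splitBidiagonal r a b i j ^ 2 = colNormSq r a b j := by
  rw [Fintype.sum_eq_add (Fin.castSucc j) (Fin.succ j) Fin.castSucc_lt_succ.ne
    fun i hi => by simp [splitBidiagonal, hi.1, hi.2]]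
  simp [splitBidiagonal, colNormSq, Fin.castSucc_lt_succ.ne, Fin.castSucc_lt_succ.ne', ite_pow]

theorem transpose_mul_self :
    (splitBidiagonal r a b)ᵀ * splitBidiagonal r a b = diagonal (colNormSq r a b) := by
  ext j k
  rw [mul_apply, diagonal_apply]
  split_ifs with hjk
  · subst hjk
    simpa [sq] using sum_sq_col j
  · exact Finset.sum_eq_zero fun i _ => by_contra fun h => hjk (eq_of_mul_ne_zero h)

theorem range_inv_sqrt_colNormSq (ha : ∀ j, 0 < a j) (hb : ∀ j, 0 < b j) :
    Set.range (fun j => (√(colNormSq r a b j))⁻¹) =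
      {(√(a r ^ 2 + b r ^ 2))⁻¹} ∪ {x : ℝ | ∃ j : Fin s, j < r ∧ x = (a j)⁻¹} ∪
        {x : ℝ | ∃ j : Fin s, r < j ∧ x = (b j)⁻¹} := by
  have hlt : ∀ j, j < r → √(colNormSq r a b j) = a j := fun j h => by
    simp [colNormSq, h.le, h.not_ge, Real.sqrt_sq (ha j).le]
  have hgt : ∀ j, r < j → √(colNormSq r a b j) = b j := fun j h => by
    simp [colNormSq, h.le, h.not_ge, Real.sqrt_sq (hb j).le]
  ext x
  simp only [Set.mem_range, Set.mem_union, Set.mem_singleton_iff, Set.mem_ofPred_eq]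
  constructor
  · rintro ⟨j, rfl⟩
    rcases lt_trichotomy j r with h | rfl | h
    · exact Or.inl (Or.inr ⟨j, h, by rw [hlt j h]⟩)
    · exact Or.inl (Or.inl (by simp [colNormSq]))
    · exact Or.inr ⟨j, h, by rw [hgt j h]⟩
  · rintro ((rfl | ⟨j, h, rfl⟩) | ⟨j, h, rfl⟩)
    · exact ⟨r, by simp [colNormSq]⟩
    · exact ⟨j, by rw [hlt j h]⟩
    · exact ⟨j, by rw [hgt j h]⟩

end splitBidiagonal

theorem pseudoinverse_norm_general (s : ℕ) (r : Fin s)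
    (a b : Fin s → ℝ) (ha : ∀ j, 0 < a j) (hb : ∀ j, 0 < b j)
    (S : Matrix (Fin (s + 1)) (Fin s) ℝ)
    (hS : ∀ i j, S i j =
      if i = Fin.castSucc j ∧ j ≤ r then a j
      else if i = Fin.succ j ∧ r ≤ j then b j
      else 0)
    (G : Matrix (Fin s) (Fin (s + 1)) ℝ) (hG : G = (S.transpose * S)⁻¹ * S.transpose)
    (M : ℝ)
    (hM : M = sSup ({(Real.sqrt (a r ^ 2 + b r ^ 2))⁻¹} ∪
      {x : ℝ | ∃ j : Fin s, j < r ∧ x = (a j)⁻¹} ∪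
      {x : ℝ | ∃ j : Fin s, r < j ∧ x = (b j)⁻¹})) :
    (∀ v : Fin (s + 1) → ℝ,
        ∑ j : Fin s, (G.mulVec v j) ^ 2 ≤ M ^ 2 * ∑ i : Fin (s + 1), (v i) ^ 2) ∧
    (∃ v : Fin (s + 1) → ℝ, v ≠ 0 ∧
        ∑ j : Fin s, (G.mulVec v j) ^ 2 = M ^ 2 * ∑ i : Fin (s + 1), (v i) ^ 2) := by
  have : Nonempty (Fin s) := ⟨r⟩
  obtain rfl : S = splitBidiagonal r a b := Matrix.ext hS
  subst hG
  refine pinv_norm_of_transpose_mul_self_eq_diagonal (splitBidiagonal.colNormSq_pos ha hb)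
    splitBidiagonal.transpose_mul_self ?_
  rw [hM, ← splitBidiagonal.range_inv_sqrt_colNormSq ha hb]
  rfl

theorem pseudoinverse_norm (s : ℕ) (hs : 1 ≤ s) (r : Fin s)
    (a b : Fin s → ℝ) (ha : ∀ j, 0 < a j) (hb : ∀ j, 0 < b j)
    (S : Matrix (Fin (s + 1)) (Fin s) ℝ)
    (hS : ∀ i j, S i j =
      if i = Fin.castSucc j ∧ j ≤ r then a j
      else if i = Fin.succ j ∧ r ≤ j then b j
      else 0)
    (G : Matrix (Fin s) (Fin (s + 1)) ℝ) (hG : G = (S.transpose * S)⁻¹ * S.transpose)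
    (M : ℝ)
    (hM : M = sSup ({(Real.sqrt (a r ^ 2 + b r ^ 2))⁻¹} ∪
      {x : ℝ | ∃ j : Fin s, j < r ∧ x = (a j)⁻¹} ∪
      {x : ℝ | ∃ j : Fin s, r < j ∧ x = (b j)⁻¹})) :
    (∀ v : Fin (s + 1) → ℝ,
        ∑ j : Fin s, (G.mulVec v j) ^ 2 ≤ M ^ 2 * ∑ i : Fin (s + 1), (v i) ^ 2) ∧
    (∃ v : Fin (s + 1) → ℝ, v ≠ 0 ∧
        ∑ j : Fin s, (G.mulVec v j) ^ 2 = M ^ 2 * ∑ i : Fin (s + 1), (v i) ^ 2) :=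
  pseudoinverse_norm_general s r a b ha hb S hS G hG M hM
end
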